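/- Let m ≥ 4, let G = (ℤ/mℤ)², let g ∈ G, and let S = f₁^[m−1] · f₂^[m−1] · (f₁+f₂) ∈ Υ_nu(G), where (f₁,f₂) is a basis of G. If S' = f₁^[−2] · S · (f₁+g) · (f₁−g) ∈ Υ_nu(G), then g = 0 and S' = S. -/

import Mathlib

/-!
In `e₁^[m-1] · e₂^[m-1] · (e₁ + e₂)` every term has multiplicity `m - 1` or `1`. If `g ≠ 0`,
the exchange leaves `f₁` with multiplicity `m - 3`, which forces `m = 4` and `f₁ = e₁ + e₂`,
while `f₂` keeps multiplicity at least `m - 1` and so is `e₁` or `e₂`, say `e₂`. Then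
`e₁ = f₁ - f₂` occurs `3` times in `S'`, but only `f₁ + f₂` and `f₁ ± g` can equal it, so
`f₁ - f₂ = f₁ + f₂`, which is impossible since `f₂` has order `m ≥ 4`.
-/

/-- `(e₁, e₂)` is a basis of the abelian group `G`, i.e. `G = ⟨e₁⟩ ⊕ ⟨e₂⟩`. -/
def IsBasis {G : Type*} [AddCommGroup G] (e₁ e₂ : G) : Prop :=
  AddSubgroup.zmultiples e₁ ⊔ AddSubgroup.zmultiples e₂ = ⊤ ∧
    AddSubgroup.zmultiples e₁ ⊓ AddSubgroup.zmultiples e₂ = ⊥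

/-- `Υ(G)` for `G = (ℤ/mℤ)²`: all sequences `e₁^[m-1] · ∏_{i=1}^m (xᵢe₁ + e₂)` for some
basis `(e₁, e₂)` and `x₁, …, x_m ∈ [0, m-1]` with `x₁ + ⋯ + x_m ≡ 1 (mod m)`. -/
def Upsilon (m : ℕ) : Set (Multiset (ZMod m × ZMod m)) :=
  { S | ∃ (e₁ e₂ : ZMod m × ZMod m) (x : Fin m → ℕ),
      IsBasis e₁ e₂ ∧ (∀ i, x i ≤ m - 1) ∧ (∑ i, x i) % m = 1 % m ∧
      S = Multiset.replicate (m - 1) e₁ +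
          Multiset.map (fun i => x i • e₁ + e₂) (Finset.univ : Finset (Fin m)).val }

/-- `Υ_u(G)`: members of `Υ(G)` with a unique term of multiplicity `m - 1`. -/
def UpsilonU (m : ℕ) : Set (Multiset (ZMod m × ZMod m)) :=
  { S | S ∈ Upsilon m ∧ ∃! g, S.count g = m - 1 }

/-- `Υ_nu(G)`: sequences `e₁^[m-1] · e₂^[m-1] · (e₁ + e₂)` for some basis `(e₁, e₂)`. -/
def UpsilonNU (m : ℕ) : Set (Multiset (ZMod m × ZMod m)) :=
  { S | ∃ (e₁ e₂ : ZMod m × ZMod m), IsBasis e₁ e₂ ∧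
      S = Multiset.replicate (m - 1) e₁ + Multiset.replicate (m - 1) e₂ + {e₁ + e₂} }

open Multiset AddSubgroup

lemma IsBasis.symm {G : Type*} [AddCommGroup G] {a b : G} (h : IsBasis a b) : IsBasis b a :=
  ⟨sup_comm (zmultiples a) _ ▸ h.1, inf_comm (zmultiples a) _ ▸ h.2⟩

lemma IsBasis.isComplement' {G : Type*} [AddCommGroup G] {a b : G} (h : IsBasis a b) :
    (zmultiples a).IsComplement' (zmultiples b) := by
  refine ⟨add_injective_of_disjoint (disjoint_iff.mpr h.2), fun x => ?_⟩
  obtain ⟨y, hy, z, hz, rfl⟩ := mem_sup.mp (h.1 ▸ mem_top x)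
  exact ⟨(⟨y, hy⟩, ⟨z, hz⟩), rfl⟩

lemma IsBasis.ne_of_left_ne_zero {G : Type*} [AddCommGroup G] {a b : G} (h : IsBasis a b)
    (ha : a ≠ 0) : a ≠ b := by
  rintro rfl
  have : a ∈ zmultiples a ⊓ zmultiples a := ⟨mem_zmultiples a, mem_zmultiples a⟩
  exact ha (mem_bot.mp (h.2 ▸ this))

section ZModSquare

variable {m : ℕ} {a b : ZMod m × ZMod m}

lemma IsBasis.addOrderOf_left [NeZero m] (h : IsBasis a b) : addOrderOf a = m := by
  have hcard := h.isComplement'.card_mul_card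
  simp only [SetLike.coe_sort_coe, Nat.card_zmultiples, Nat.card_prod, Nat.card_zmod] at hcard
  have hle (x : ZMod m × ZMod m) : addOrderOf x ≤ m :=
    Nat.le_of_dvd (NeZero.pos m) (addOrderOf_dvd_of_nsmul_eq_zero (by ext <;> simp))
  nlinarith [hle a, hle b]

lemma IsBasis.nsmul_left_ne_zero (h : IsBasis a b) {k : ℕ} (hk₀ : k ≠ 0) (hk : k < m) :
    k • a ≠ 0 :=
  have : NeZero m := ⟨by omega⟩
  nsmul_ne_zero_of_lt_addOrderOf hk₀ (by rwa [h.addOrderOf_left])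

lemma IsBasis.left_ne_zero (h : IsBasis a b) (hm : 2 ≤ m) : a ≠ 0 := by
  simpa using h.nsmul_left_ne_zero one_ne_zero hm

lemma IsBasis.left_ne_right (h : IsBasis a b) (hm : 2 ≤ m) : a ≠ b :=
  h.ne_of_left_ne_zero (h.left_ne_zero hm)

end ZModSquare

section NuSeq

variable {G : Type*} [AddCommGroup G] {n : ℕ} {e₁ e₂ f₁ f₂ g : G}

def nuSeq (n : ℕ) (e₁ e₂ : G) : Multiset G :=
  replicate n e₁ + replicate n e₂ + {e₁ + e₂}

lemma nuSeq_comm (n : ℕ) (e₁ e₂ : G) : nuSeq n e₁ e₂ = nuSeq n e₂ e₁ := by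
  rw [nuSeq, nuSeq, add_comm (replicate n e₁), add_comm e₁]

variable [DecidableEq G]

lemma count_nuSeq (he₁ : e₁ ≠ 0) (he₂ : e₂ ≠ 0) (he : e₁ ≠ e₂) (x : G) :
    (nuSeq n e₁ e₂).count x = if x = e₁ ∨ x = e₂ then n else if x = e₁ + e₂ then 1 else 0 := by
  have h₁ : e₁ ≠ e₁ + e₂ := by simpa using he₂
  have h₂ : e₂ ≠ e₁ + e₂ := by simpa using he₁
  simp only [nuSeq, count_add, count_replicate, count_singleton]
  by_cases hx₁ : x = e₁
  · subst hx₁; simp [he, he.symm, h₁]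
  by_cases hx₂ : x = e₂
  · subst hx₂; simp [he, he.symm, h₂]
  simp [hx₁, hx₂, Ne.symm hx₁, Ne.symm hx₂]


def exchange (S : Multiset G) (f g : G) : Multiset G :=
  S - replicate 2 f + {f + g, f - g}

lemma count_exchange_nuSeq_left (hg : g ≠ 0) (hf₂ : f₂ ≠ 0) (hf : f₁ ≠ f₂) :
    (exchange (nuSeq n f₁ f₂) f₁ g).count f₁ = n - 2 := by
  have hsum : f₁ ≠ f₁ + f₂ := by simpa using hf₂
  have hplus : f₁ ≠ f₁ + g := by simpa using hg
  have hminus : f₁ ≠ f₁ - g := fun h => hg (sub_eq_self.mp h.symm)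
  simp only [exchange, nuSeq, insert_eq_cons, count_add, count_sub, count_cons, count_replicate,
    count_singleton, if_neg hf.symm, if_neg hsum, if_neg hplus, if_neg hminus, if_true]
  omega

lemma le_count_exchange_nuSeq_right (hf : f₁ ≠ f₂) :
    n ≤ (exchange (nuSeq n f₁ f₂) f₁ g).count f₂ := by
  simp only [exchange, nuSeq, insert_eq_cons, count_add, count_sub, count_cons, count_replicate,
    count_singleton, if_neg hf, if_true]
  omega

lemma eq_zero_of_exchange_nuSeq_eq_nuSeq_right (hn : 3 ≤ n) (hf₂ : f₂ ≠ 0) (hf : f₁ ≠ f₂)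
    (h2f₂ : 2 • f₂ ≠ 0) (he : e₁ ≠ 0) (hef : e₁ ≠ f₂)
    (h : exchange (nuSeq n f₁ f₂) f₁ g = nuSeq n e₁ f₂) : g = 0 := by
  by_contra hg
  have hcount (x : G) := congrArg (count x) h
  simp only [count_nuSeq he hf₂ hef] at hcount
  obtain ⟨rfl, hn₃⟩ : f₁ = e₁ + f₂ ∧ n = 3 := by
    have := hcount f₁
    rw [count_exchange_nuSeq_left hg hf₂ hf] at this
    split_ifs at this with _ hsum
    · omega
    · exact ⟨hsum, by omega⟩
    · omega
  have := hcount e₁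
  have he₁ : e₁ ≠ e₁ + f₂ := by simpa using hf₂
  simp only [exchange, nuSeq, insert_eq_cons, count_add, count_sub, count_cons, count_replicate,
    count_singleton, if_neg he₁, if_neg he₁.symm, if_neg hef.symm, if_true, true_or] at this
  -- on the left `e₁` can only be one of `f₁ + f₂ = e₁ + 2 • f₂` and `f₁ ± g`, yet it occurs 3 times
  have hdouble : e₁ = e₁ + f₂ + f₂ := by
    by_contra hne
    rw [if_neg hne] at this
    split_ifs at this <;> omega
  exact h2f₂ (two_nsmul f₂ ▸ left_eq_add.mp (hdouble.trans (add_assoc e₁ f₂ f₂)))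

lemma eq_zero_of_exchange_nuSeq_eq_nuSeq (hn : 3 ≤ n) (hf₂ : f₂ ≠ 0) (hf : f₁ ≠ f₂)
    (h2f₂ : 2 • f₂ ≠ 0) (he₁ : e₁ ≠ 0) (he₂ : e₂ ≠ 0) (he : e₁ ≠ e₂)
    (h : exchange (nuSeq n f₁ f₂) f₁ g = nuSeq n e₁ e₂) : g = 0 := by
  have hf₂e : f₂ = e₁ ∨ f₂ = e₂ := by
    have := le_count_exchange_nuSeq_right (n := n) (g := g) hf
    rw [h, count_nuSeq he₁ he₂ he] at this
    split_ifs at this with hmem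
    · exact hmem
    all_goals omega
  rcases hf₂e with rfl | rfl
  · exact eq_zero_of_exchange_nuSeq_eq_nuSeq_right hn hf₂ hf h2f₂ he₂ he.symm
      (h.trans (nuSeq_comm n f₂ e₂))
  · exact eq_zero_of_exchange_nuSeq_eq_nuSeq_right hn hf₂ hf h2f₂ he₁ he h

end NuSeq

theorem stmt_8_general (m : ℕ) (hm : 4 ≤ m) (g f₁ f₂ : ZMod m × ZMod m)
    (hbasis : IsBasis f₁ f₂)
    (S : Multiset (ZMod m × ZMod m))
    (hS : S = Multiset.replicate (m - 1) f₁ + Multiset.replicate (m - 1) f₂ + {f₁ + f₂})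
    (S' : Multiset (ZMod m × ZMod m))
    (hS' : S' = (S - Multiset.replicate 2 f₁) + {f₁ + g, f₁ - g})
    (hS'U : S' ∈ UpsilonNU m) :
    g = 0 ∧ S' = S := by
  subst hS
  obtain ⟨e₁, e₂, he, hS'e⟩ := hS'U
  have hm₂ : 2 ≤ m := by omega
  have hg : g = 0 :=
    eq_zero_of_exchange_nuSeq_eq_nuSeq (by omega) (hbasis.symm.left_ne_zero hm₂)
      (hbasis.left_ne_right hm₂) (hbasis.symm.nsmul_left_ne_zero two_ne_zero (by omega))
      (he.left_ne_zero hm₂) (he.symm.left_ne_zero hm₂) (he.left_ne_right hm₂)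
      (hS'.symm.trans hS'e)
  refine ⟨hg, ?_⟩
  rw [hS', hg, add_zero, sub_zero]
  refine tsub_add_cancel_of_le (le_add_right (le_add_right ?_))
  exact (replicate_le_replicate f₁).mpr (by omega)

theorem stmt_8 (m : ℕ) (hm : 4 ≤ m) (g f₁ f₂ : ZMod m × ZMod m)
    (hbasis : IsBasis f₁ f₂)
    (S : Multiset (ZMod m × ZMod m))
    (hS : S = Multiset.replicate (m - 1) f₁ + Multiset.replicate (m - 1) f₂ + {f₁ + f₂})
    (hSNU : S ∈ UpsilonNU m)
    (S' : Multiset (ZMod m × ZMod m))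
    (hS' : S' = (S - Multiset.replicate 2 f₁) + {f₁ + g, f₁ - g})
    (hS'U : S' ∈ UpsilonNU m) :
    g = 0 ∧ S' = S :=
  stmt_8_general m hm g f₁ f₂ hbasis S hS S' hS' hS'U
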